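/- Let n ≥ 3 be an integer and consider the walk with p_{1,0} = p_{-1,0} = sin²(π/n)/2, p_{-1,1} = p_{1,-1} = 1/2 − sin²(π/n)/2, and all other p_{i,j} = 0. Then the drift is zero, the angle θ = arccos(−R), where R = (Σ_{i,j} ij·p_{i,j})/(√(Σ_{i,j} i²·p_{i,j})·√(Σ_{i,j} j²·p_{i,j})), equals π/n, and the group of the walk W is finite of order 2n. -/

import Mathlib

open Polynomial

/-- The kernel `K(x,y) = xy(Σ_{-1≤i,j≤1} p_{i,j} x^i y^j - 1)` as an element of `ℂ[x,y]`
(written with nonnegative exponents `i+1, j+1 ∈ {0,1,2}`). -/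
noncomputable def kernelK (p : ℤ → ℤ → ℝ) : MvPolynomial (Fin 2) ℂ :=
  (∑ i ∈ Finset.Icc (-1 : ℤ) 1, ∑ j ∈ Finset.Icc (-1 : ℤ) 1,
      MvPolynomial.C (p i j : ℂ) * MvPolynomial.X 0 ^ (i + 1).toNat *
        MvPolynomial.X 1 ^ (j + 1).toNat)
    - MvPolynomial.X 0 * MvPolynomial.X 1

/-- `a(x) = p_{1,1} x² + p_{0,1} x + p_{-1,1}` as a polynomial over `ℂ`. -/
noncomputable def polyA (p : ℤ → ℤ → ℝ) : Polynomial ℂ :=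
  C (p 1 1 : ℂ) * X ^ 2 + C (p 0 1 : ℂ) * X + C (p (-1) 1 : ℂ)

/-- `c(x) = p_{1,-1} x² + p_{0,-1} x + p_{-1,-1}` as a polynomial over `ℂ`. -/
noncomputable def polyC (p : ℤ → ℤ → ℝ) : Polynomial ℂ :=
  C (p 1 (-1) : ℂ) * X ^ 2 + C (p 0 (-1) : ℂ) * X + C (p (-1) (-1) : ℂ)

/-- `ã(y) = p_{1,1} y² + p_{1,0} y + p_{1,-1}` as a polynomial over `ℂ`. -/
noncomputable def polyAt (p : ℤ → ℤ → ℝ) : Polynomial ℂ :=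
  C (p 1 1 : ℂ) * X ^ 2 + C (p 1 0 : ℂ) * X + C (p 1 (-1) : ℂ)

/-- `c̃(y) = p_{-1,1} y² + p_{-1,0} y + p_{-1,-1}` as a polynomial over `ℂ`. -/
noncomputable def polyCt (p : ℤ → ℤ → ℝ) : Polynomial ℂ :=
  C (p (-1) 1 : ℂ) * X ^ 2 + C (p (-1) 0 : ℂ) * X + C (p (-1) (-1) : ℂ)

/-- The quotient ring `ℂ[x,y]/(K)`. -/
abbrev QuotK (p : ℤ → ℤ → ℝ) : Type :=
  MvPolynomial (Fin 2) ℂ ⧸ Ideal.span {kernelK p}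

/-- The image `x̄` of `x` in a fraction field `F` of `ℂ[x,y]/(K)`. -/
noncomputable def xbar (p : ℤ → ℤ → ℝ) (F : Type*) [Field F] [Algebra (QuotK p) F] : F :=
  algebraMap (QuotK p) F (Ideal.Quotient.mk (Ideal.span {kernelK p}) (MvPolynomial.X 0))

/-- The image `ȳ` of `y` in a fraction field `F` of `ℂ[x,y]/(K)`. -/
noncomputable def ybar (p : ℤ → ℤ → ℝ) (F : Type*) [Field F] [Algebra (QuotK p) F] : F :=
  algebraMap (QuotK p) F (Ideal.Quotient.mk (Ideal.span {kernelK p}) (MvPolynomial.X 1))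

/-- The correlation coefficient `R` of the walk. -/
noncomputable def corrR (p : ℤ → ℤ → ℝ) : ℝ :=
  (∑ i ∈ Finset.Icc (-1 : ℤ) 1, ∑ j ∈ Finset.Icc (-1 : ℤ) 1, (i : ℝ) * (j : ℝ) * p i j) /
    (Real.sqrt (∑ i ∈ Finset.Icc (-1 : ℤ) 1, ∑ j ∈ Finset.Icc (-1 : ℤ) 1, (i : ℝ) ^ 2 * p i j) *
     Real.sqrt (∑ i ∈ Finset.Icc (-1 : ℤ) 1, ∑ j ∈ Finset.Icc (-1 : ℤ) 1, (j : ℝ) ^ 2 * p i j))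

/-- The angle `θ = arccos(-R)`. -/
noncomputable def theta (p : ℤ → ℤ → ℝ) : ℝ := Real.arccos (-(corrR p))

/-- The jump probabilities of the walk of Kurkova–Raschel:
`p_{1,0} = p_{-1,0} = sin²(π/n)/2`, `p_{-1,1} = p_{1,-1} = 1/2 - sin²(π/n)/2`, others `0`. -/
noncomputable def pKR (n : ℕ) : ℤ → ℤ → ℝ := fun i j =>
  if (i = 1 ∧ j = 0) ∨ (i = -1 ∧ j = 0) then Real.sin (Real.pi / n) ^ 2 / 2
  else if (i = -1 ∧ j = 1) ∨ (i = 1 ∧ j = -1) then 1 / 2 - Real.sin (Real.pi / n) ^ 2 / 2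
  else 0

/-!
After the substitution `sin²(π/n) = -(ω - 1)² / (4ω)` with `ω = e^{2πi/n}`, the kernel of this
walk becomes `8ω K = (ω+1)²(x² + y²) - (ω-1)²(x² + 1)y - 8ωxy`, a rational curve. The function
`t = ((ω+1)(y-1) - 2ω(x-1)) / ((ω+1)(y-1) - 2(x-1))` is a coordinate on it: `x` and `y` are
rational functions of `t`, so an automorphism of `F` is determined by its value at `t`. In this
coordinate `ξ` and `η` act as `t ↦ ω/t` and `t ↦ 1/t`, so both are involutions and `ηξ` is
`t ↦ ωt`, of order `n`. Two involutions whose product has order `n ≥ 3` generate a dihedral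
group of order `2n`.
-/

lemma sum_Icc_neg_one_one {M : Type*} [AddCommMonoid M] (f : ℤ → M) :
    ∑ i ∈ Finset.Icc (-1 : ℤ) 1, f i = f (-1) + f 0 + f 1 := by
  rw [show Finset.Icc (-1 : ℤ) 1 = {-1, 0, 1} by rfl]
  simp [add_assoc]

section pKR
variable (n : ℕ)

lemma pKR_one_zero : pKR n 1 0 = Real.sin (Real.pi / n) ^ 2 / 2 := by simp [pKR]
lemma pKR_one_neg_one : pKR n 1 (-1) = 1 / 2 - Real.sin (Real.pi / n) ^ 2 / 2 := by simp [pKR]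
@[simp] lemma pKR_neg_one_zero : pKR n (-1) 0 = pKR n 1 0 := by simp [pKR]
@[simp] lemma pKR_neg_one_one : pKR n (-1) 1 = pKR n 1 (-1) := by simp [pKR]
@[simp] lemma pKR_one_one : pKR n 1 1 = 0 := by simp [pKR]
@[simp] lemma pKR_neg_one_neg_one : pKR n (-1) (-1) = 0 := by simp [pKR]
@[simp] lemma pKR_zero_left (j : ℤ) : pKR n 0 j = 0 := by simp [pKR]

lemma drift_x_pKR :
    ∑ i ∈ Finset.Icc (-1 : ℤ) 1, ∑ j ∈ Finset.Icc (-1 : ℤ) 1, (i : ℝ) * pKR n i j = 0 := by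
  simp [sum_Icc_neg_one_one]

lemma drift_y_pKR :
    ∑ i ∈ Finset.Icc (-1 : ℤ) 1, ∑ j ∈ Finset.Icc (-1 : ℤ) 1, (j : ℝ) * pKR n i j = 0 := by
  simp [sum_Icc_neg_one_one]

lemma corrR_pKR (hn : 3 ≤ n) : corrR (pKR n) = -Real.cos (Real.pi / n) := by
  have hcos : 0 < Real.cos (Real.pi / n) := by
    apply Real.cos_pos_of_mem_Ioo
    constructor
    · linarith [Real.pi_pos, show 0 < Real.pi / n by positivity]
    · exact div_lt_div_of_pos_left Real.pi_pos (by norm_num) (by exact_mod_cast (by omega : 2 < n))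
  have hxy : ∑ i ∈ Finset.Icc (-1 : ℤ) 1, ∑ j ∈ Finset.Icc (-1 : ℤ) 1,
      (i : ℝ) * (j : ℝ) * pKR n i j = -Real.cos (Real.pi / n) ^ 2 := by
    simp [sum_Icc_neg_one_one, pKR_one_neg_one, Real.sin_sq]; ring
  have hxx : ∑ i ∈ Finset.Icc (-1 : ℤ) 1, ∑ j ∈ Finset.Icc (-1 : ℤ) 1,
      (i : ℝ) ^ 2 * pKR n i j = 1 := by
    simp [sum_Icc_neg_one_one, pKR_one_zero, pKR_one_neg_one]; ring
  have hyy : ∑ i ∈ Finset.Icc (-1 : ℤ) 1, ∑ j ∈ Finset.Icc (-1 : ℤ) 1,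
      (j : ℝ) ^ 2 * pKR n i j = Real.cos (Real.pi / n) ^ 2 := by
    simp [sum_Icc_neg_one_one, pKR_one_neg_one, Real.sin_sq]; ring
  rw [corrR, hxy, hxx, hyy, Real.sqrt_one, Real.sqrt_sq hcos.le]
  field_simp

lemma theta_pKR (hn : 3 ≤ n) : theta (pKR n) = Real.pi / n := by
  rw [theta, corrR_pKR n hn, neg_neg, Real.arccos_cos (by positivity)]
  exact div_le_self Real.pi_pos.le (by exact_mod_cast (by omega : 1 ≤ n))

lemma eval_zero_kernelK_pKR : MvPolynomial.eval 0 (kernelK (pKR n)) = 0 := by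
  simp [kernelK, sum_Icc_neg_one_one]

lemma eval_one_kernelK_pKR : MvPolynomial.eval 1 (kernelK (pKR n)) = 0 := by
  simp [kernelK, sum_Icc_neg_one_one, pKR_one_zero, pKR_one_neg_one]
  ring

end pKR

namespace Subgroup
open Pointwise

variable {G : Type*} [Group G] {a b : G}

lemma mul_mul_mem_zpowers_mul_of_mul_self_eq_one (ha : a * a = 1) (hb : b * b = 1) {g : G}
    (hg : g ∈ zpowers (b * a)) : a * g * a ∈ zpowers (b * a) := by
  obtain ⟨k, rfl⟩ := hg
  have hinv : a⁻¹ = a := inv_eq_of_mul_eq_one_left ha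
  have hconj : a * (b * a) * a = (b * a)⁻¹ := by
    rw [mul_inv_rev, hinv, inv_eq_of_mul_eq_one_left hb, mul_assoc, mul_assoc, ha, mul_one]
  have := map_zpow (MulAut.conj a) (b * a) k
  simp only [MulAut.conj_apply, hinv, hconj] at this
  simp only [this]
  exact zpow_mem (inv_mem (mem_zpowers _)) k

lemma mem_closure_pair_iff_of_mul_self_eq_one (ha : a * a = 1) (hb : b * b = 1) {g : G} :
    g ∈ closure {a, b} ↔ g ∈ zpowers (b * a) ∨ a * g ∈ zpowers (b * a) := by
  have hconj {d : G} := mul_mul_mem_zpowers_mul_of_mul_self_eq_one ha hb (g := d)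
  have haa (x : G) : a * (a * x) = x := by rw [← mul_assoc, ha, one_mul]
  refine ⟨fun hg => ?_, ?_⟩
  · induction hg using closure_induction with
    | mem g hg =>
      rcases hg with hg | hg <;> rw [hg]
      · exact Or.inr (ha ▸ one_mem _)
      · exact Or.inr (by simpa [mul_assoc, ha] using hconj (mem_zpowers (b * a)))
    | one => exact Or.inl (one_mem _)
    | mul g h _ _ hg hh =>
      rcases hg with hg | hg <;> rcases hh with hh | hh
      · exact Or.inl (mul_mem hg hh)
      · exact Or.inr (by simpa [mul_assoc, haa] using mul_mem (hconj hg) hh)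
      · exact Or.inr (by simpa [mul_assoc] using mul_mem hg hh)
      · exact Or.inl (by simpa [mul_assoc, haa] using mul_mem (hconj hg) hh)
    | inv g _ hg =>
      rcases hg with hg | hg
      · exact Or.inl (inv_mem hg)
      · exact Or.inr (by simpa [mul_assoc, haa] using hconj (inv_mem hg))
  · have hD : zpowers (b * a) ≤ closure {a, b} :=
      zpowers_le.mpr (mul_mem (subset_closure (by simp)) (subset_closure (by simp)))
    rintro (hg | hg)
    · exact hD hg
    · simpa [haa] using mul_mem (subset_closure (by simp) : a ∈ closure {a, b}) (hD hg)

lemma notMem_zpowers_mul_of_mul_self_eq_one (ha : a * a = 1) (hb : b * b = 1)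
    (hn : 2 < orderOf (b * a)) : a ∉ zpowers (b * a) := by
  rintro ⟨k, hk⟩
  have hcomm : Commute ((b * a) ^ k) (b * a) := (Commute.refl (b * a)).zpow_left k
  simp only at hk
  rw [hk] at hcomm
  have hsq : (b * a) ^ 2 = 1 := by
    have hconj : a * (b * a) * a = (b * a)⁻¹ := by
      rw [mul_inv_rev, inv_eq_of_mul_eq_one_left ha, inv_eq_of_mul_eq_one_left hb, mul_assoc,
        mul_assoc, ha, mul_one]
    rw [hcomm.eq, mul_assoc, ha, mul_one] at hconj
    rw [sq, ← mul_inv_cancel (b * a), ← hconj]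
  have := Nat.le_of_dvd two_pos (orderOf_dvd_of_pow_eq_one hsq)
  omega

theorem card_closure_pair_of_mul_self_eq_one (ha : a * a = 1) (hb : b * b = 1)
    (hn : 2 < orderOf (b * a)) : Nat.card (closure {a, b}) = 2 * orderOf (b * a) := by
  set D := zpowers (b * a) with hD
  have hinv : a⁻¹ = a := inv_eq_of_mul_eq_one_left ha
  have hcoe : (closure {a, b} : Set G) = (D : Set G) ∪ a • (D : Set G) := by
    ext g
    simp [hD, Set.mem_smul_set_iff_inv_smul_mem, hinv,
      mem_closure_pair_iff_of_mul_self_eq_one ha hb]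
  have hDfin : (D : Set G).Finite := (orderOf_pos_iff.mp (by omega)).finite_zpowers
  have hdisj : Disjoint (D : Set G) (a • (D : Set G)) := by
    refine Set.disjoint_left.mpr fun g hg hag =>
      notMem_zpowers_mul_of_mul_self_eq_one ha hb hn ?_
    rw [Set.mem_smul_set_iff_inv_smul_mem, hinv, smul_eq_mul] at hag
    simpa using mul_mem hag (inv_mem hg)
  rw [← SetLike.coe_sort_coe, Nat.card_coe_set_eq, hcoe, Set.ncard_union_eq hdisj hDfin
    hDfin.smul_set, Set.ncard_smul_set, ← Nat.card_coe_set_eq, SetLike.coe_sort_coe,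
    Nat.card_zpowers, two_mul]

end Subgroup

namespace AlgEquiv
variable {K F : Type*} [Field K] [Field F] [Algebra K F] {t c : F}

lemma mul_self_eq_one_of_apply_eq_div (ht : Function.Injective fun σ : F ≃ₐ[K] F => σ t)
    {σ : F ≃ₐ[K] F} (hc : c ≠ 0) (hσc : σ c = c) (hσ : σ t = c / t) : σ * σ = 1 := by
  refine ht ?_
  simp only [mul_apply, hσ, map_div₀, hσc, one_apply]
  exact div_div_cancel₀ hc

lemma orderOf_eq_of_apply_eq_mul (ht : Function.Injective fun σ : F ≃ₐ[K] F => σ t)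
    (ht0 : t ≠ 0) {σ : F ≃ₐ[K] F} (hσc : σ c = c) (hσ : σ t = c * t) :
    orderOf σ = orderOf c := by
  have hpow (k : ℕ) : (σ ^ k) t = c ^ k * t := by
    induction k with
    | zero => simp
    | succ k ih => rw [pow_succ', mul_apply, ih, map_mul, map_pow, hσc, hσ, pow_succ']; ring
  refine orderOf_eq_orderOf_iff.mpr fun k => ?_
  rw [← ht.eq_iff]
  simp [hpow, mul_eq_right₀, ht0]

end AlgEquiv

section Curve

def scaledKernel {R : Type*} [CommRing R] (ω x y : R) : R :=
  (ω + 1) ^ 2 * (x ^ 2 + y ^ 2) - (ω - 1) ^ 2 * (x ^ 2 + 1) * y - 8 * ω * (x * y)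

def leadCoeffX {R : Type*} [CommRing R] (ω y : R) : R := (ω + 1) ^ 2 - (ω - 1) ^ 2 * y

def curveCoordNum {R : Type*} [CommRing R] (ω x y : R) : R :=
  (ω + 1) * (y - 1) - 2 * ω * (x - 1)

def curveCoordDen {R : Type*} [CommRing R] (ω x y : R) : R := (ω + 1) * (y - 1) - 2 * (x - 1)

variable {F : Type*} [Field F] {ω x y : F}

def curveCoord (ω x y : F) : F := curveCoordNum ω x y / curveCoordDen ω x y

-- The hypotheses on `y'` and `x'` below say that they are the second roots of the kernel in
-- `y` and in `x` (Vieta's formula for the product of the roots).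
lemma curveCoordNum_mul_curveCoordNum_of_mul_eq_sq (hK : scaledKernel ω x y = 0) (hy : y ≠ 0)
    {y' : F} (hyy' : y * y' = x ^ 2) :
    curveCoordNum ω x y * curveCoordNum ω x y' =
      ω * (curveCoordDen ω x y * curveCoordDen ω x y') := by
  refine mul_left_cancel₀ hy ?_
  unfold curveCoordNum curveCoordDen
  unfold scaledKernel at hK
  linear_combination (1 - ω) * (ω + 1) ^ 2 * (y - 1) * hyy' - (1 - ω) * hK

lemma curveCoordNum_mul_curveCoordNum_of_mul_eq (hK : scaledKernel ω x y = 0) (hx : x ≠ 0)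
    (hA : leadCoeffX ω y ≠ 0) {x' : F}
    (hxx' : leadCoeffX ω y * x * x' = (ω + 1) ^ 2 * y ^ 2 - (ω - 1) ^ 2 * y) :
    curveCoordNum ω x y * curveCoordNum ω x' y = curveCoordDen ω x y * curveCoordDen ω x' y := by
  refine mul_left_cancel₀ (mul_ne_zero hA hx) ?_
  unfold curveCoordNum curveCoordDen leadCoeffX at *
  unfold scaledKernel at hK
  linear_combination 2 * (ω ^ 2 - 1) * ((2 * x - (y + 1)) * hxx' - (y + 1) * hK)

lemma x_eq_of_scaledKernel_eq_zero (hK : scaledKernel ω x y = 0) (hv : curveCoordDen ω x y ≠ 0)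
    (hω : ω - curveCoord ω x y ≠ 0) (h1 : 1 - curveCoord ω x y ≠ 0) :
    x = (ω + curveCoord ω x y) * (1 + curveCoord ω x y) /
      ((ω - curveCoord ω x y) * (1 - curveCoord ω x y)) := by
  rw [eq_div_iff (mul_ne_zero hω h1)]
  unfold curveCoord at *
  field_simp
  unfold curveCoordNum curveCoordDen
  unfold scaledKernel at hK
  linear_combination (-2 * (ω + 1)) * hK

lemma y_eq_of_scaledKernel_eq_zero (hK : scaledKernel ω x y = 0) (hv : curveCoordDen ω x y ≠ 0)
    (h1 : 1 - curveCoord ω x y ≠ 0) :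
    y = ((1 + curveCoord ω x y) / (1 - curveCoord ω x y)) ^ 2 := by
  rw [div_pow, eq_div_iff (pow_ne_zero 2 h1)]
  unfold curveCoord at *
  field_simp
  unfold curveCoordNum curveCoordDen
  unfold scaledKernel at hK
  linear_combination (-4) * hK

lemma map_curveCoord {K G : Type*} [Field K] [FunLike G F K] [RingHomClass G F K] (φ : G) :
    φ (curveCoord ω x y) = curveCoord (φ ω) (φ x) (φ y) := by
  simp [curveCoord, curveCoordNum, curveCoordDen, map_ofNat]

lemma map_curveCoord_eq_div_of_mul_map_eq_sq {G : Type*} [FunLike G F F] [RingHomClass G F F]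
    (σ : G) (hK : scaledKernel ω x y = 0) (hy : y ≠ 0) (hu : curveCoordNum ω x y ≠ 0)
    (hv : curveCoordDen ω x y ≠ 0) (hσω : σ ω = ω) (hσx : σ x = x) (hσy : y * σ y = x ^ 2) :
    σ (curveCoord ω x y) = ω / curveCoord ω x y := by
  have hv' : curveCoordDen ω x (σ y) ≠ 0 := by
    simpa [curveCoordDen, hσω, hσx, map_ofNat] using (map_ne_zero σ).mpr hv
  rw [map_curveCoord, hσω, hσx, curveCoord, curveCoord, div_div_eq_mul_div,
    div_eq_div_iff hv' hu]
  linear_combination curveCoordNum_mul_curveCoordNum_of_mul_eq_sq hK hy hσy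

lemma map_curveCoord_eq_one_div_of_mul_map_eq {G : Type*} [FunLike G F F] [RingHomClass G F F]
    (σ : G) (hK : scaledKernel ω x y = 0) (hx : x ≠ 0) (hA : leadCoeffX ω y ≠ 0)
    (hu : curveCoordNum ω x y ≠ 0) (hv : curveCoordDen ω x y ≠ 0) (hσω : σ ω = ω)
    (hσy : σ y = y) (hσx : leadCoeffX ω y * x * σ x = (ω + 1) ^ 2 * y ^ 2 - (ω - 1) ^ 2 * y) :
    σ (curveCoord ω x y) = 1 / curveCoord ω x y := by
  have hv' : curveCoordDen ω (σ x) y ≠ 0 := by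
    simpa [curveCoordDen, hσω, hσy, map_ofNat] using (map_ne_zero σ).mpr hv
  rw [map_curveCoord, hσω, hσy, curveCoord, curveCoord, one_div_div, div_eq_div_iff hv' hu]
  linear_combination curveCoordNum_mul_curveCoordNum_of_mul_eq hK hx hA hσx

end Curve

section KernelCurve
variable {p : ℤ → ℤ → ℝ} {F : Type*} [Field F] [Algebra ℂ F] [Algebra (QuotK p) F]
  [IsScalarTower ℂ (QuotK p) F]

lemma aeval_xbar_ybar (q : MvPolynomial (Fin 2) ℂ) :
    MvPolynomial.aeval ![xbar p F, ybar p F] q =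
      algebraMap (QuotK p) F (Ideal.Quotient.mk _ q) := by
  have : MvPolynomial.aeval ![xbar p F, ybar p F] =
      (IsScalarTower.toAlgHom ℂ (QuotK p) F).comp (Ideal.Quotient.mkₐ ℂ _) := by
    ext i
    fin_cases i <;> simp [xbar, ybar]
  rw [this]
  rfl

lemma aeval_xbar_ybar_kernelK : MvPolynomial.aeval ![xbar p F, ybar p F] (kernelK p) = 0 := by
  rw [aeval_xbar_ybar, Ideal.Quotient.eq_zero_iff_mem.mpr (Ideal.mem_span_singleton_self _),
    map_zero]

lemma aeval_xbar_ybar_ne_zero [IsFractionRing (QuotK p) F] {q : MvPolynomial (Fin 2) ℂ}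
    (pt : Fin 2 → ℂ) (hK : MvPolynomial.eval pt (kernelK p) = 0)
    (hq : MvPolynomial.eval pt q ≠ 0) : MvPolynomial.aeval ![xbar p F, ybar p F] q ≠ 0 := by
  rw [aeval_xbar_ybar, map_ne_zero_iff _ (IsFractionRing.injective (QuotK p) F), Ne,
    Ideal.Quotient.eq_zero_iff_mem, Ideal.mem_span_singleton]
  rintro ⟨g, rfl⟩
  simp [hK] at hq

lemma AlgEquiv.ext_of_xbar_ybar [IsFractionRing (QuotK p) F] {σ τ : F ≃ₐ[ℂ] F}
    (hx : σ (xbar p F) = τ (xbar p F)) (hy : σ (ybar p F) = τ (ybar p F)) : σ = τ := by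
  have hpoly : (σ : F →ₐ[ℂ] F).comp (MvPolynomial.aeval ![xbar p F, ybar p F]) =
      (τ : F →ₐ[ℂ] F).comp (MvPolynomial.aeval ![xbar p F, ybar p F]) := by
    ext i
    fin_cases i
    · simpa using hx
    · simpa using hy
  have hquot (a : QuotK p) : σ (algebraMap _ F a) = τ (algebraMap _ F a) := by
    obtain ⟨q, rfl⟩ := Ideal.Quotient.mk_surjective a
    simpa [aeval_xbar_ybar] using DFunLike.congr_fun hpoly q
  ext z
  obtain ⟨a, b, -, rfl⟩ := IsFractionRing.div_surjective (A := QuotK p) z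
  rw [map_div₀, map_div₀, hquot, hquot]

end KernelCurve

open Complex in
lemma four_mul_exp_mul_sin_sq (θ : ℂ) :
    4 * exp (2 * θ * I) * sin θ ^ 2 = -(exp (2 * θ * I) - 1) ^ 2 := by
  have h2 : exp (2 * θ * I) = exp (θ * I) ^ 2 := by rw [← exp_nat_mul]; ring_nf
  rw [sin, h2, neg_mul, exp_neg]
  field_simp
  ring_nf
  rw [I_sq]
  ring

noncomputable def expRoot (n : ℕ) : ℂ := Complex.exp (2 * Real.pi * Complex.I / n)

lemma isPrimitiveRoot_expRoot {n : ℕ} (hn : n ≠ 0) : IsPrimitiveRoot (expRoot n) n :=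
  Complex.isPrimitiveRoot_exp n hn

lemma expRoot_ne_one {n : ℕ} (hn : 3 ≤ n) : expRoot n ≠ 1 :=
  (isPrimitiveRoot_expRoot (by omega)).ne_one (by omega)

lemma expRoot_add_one_ne_zero {n : ℕ} (hn : 3 ≤ n) : expRoot n + 1 ≠ 0 := by
  intro h
  refine (isPrimitiveRoot_expRoot (n := n) (by omega)).pow_ne_one_of_pos_of_lt two_ne_zero
    (by omega) ?_
  rw [eq_neg_of_add_eq_zero_left h]
  norm_num

section WalkCurve
variable (n : ℕ) {F : Type*} [Field F] [Algebra ℂ F]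

local notation "ω" => algebraMap ℂ F (expRoot n)

lemma eight_mul_expRoot_mul_pKR_one_zero :
    8 * ω * algebraMap ℂ F (pKR n 1 0) = -(ω - 1) ^ 2 := by
  have h := four_mul_exp_mul_sin_sq (Real.pi / n)
  rw [show 2 * (Real.pi / n : ℂ) * Complex.I = 2 * Real.pi * Complex.I / n by ring] at h
  have hC : 8 * expRoot n * (pKR n 1 0 : ℂ) = -(expRoot n - 1) ^ 2 := by
    rw [expRoot, pKR_one_zero]
    push_cast
    linear_combination h
  simpa [map_ofNat] using congrArg (algebraMap ℂ F) hC

lemma eight_mul_expRoot_mul_pKR_one_neg_one :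
    8 * ω * algebraMap ℂ F (pKR n 1 (-1)) = (ω + 1) ^ 2 := by
  have h : 2 * (pKR n 1 (-1) : ℂ) = 1 - 2 * pKR n 1 0 := by
    rw [pKR_one_neg_one, pKR_one_zero]
    push_cast
    ring
  have hF := congrArg (algebraMap ℂ F) h
  simp only [map_mul, map_sub, map_one, map_ofNat] at hF
  linear_combination 4 * ω * hF - eight_mul_expRoot_mul_pKR_one_zero n (F := F)

variable [Algebra (QuotK (pKR n)) F] [IsScalarTower ℂ (QuotK (pKR n)) F]

local notation "x̄" => xbar (pKR n) F
local notation "ȳ" => ybar (pKR n) F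

lemma scaledKernel_xbar_ybar : scaledKernel ω x̄ ȳ = 0 := by
  have h := aeval_xbar_ybar_kernelK (p := pKR n) (F := F)
  simp [kernelK, sum_Icc_neg_one_one] at h
  unfold scaledKernel
  linear_combination 8 * ω * h - (x̄ ^ 2 * ȳ + ȳ) * eight_mul_expRoot_mul_pKR_one_zero n (F := F) -
    (x̄ ^ 2 + ȳ ^ 2) * eight_mul_expRoot_mul_pKR_one_neg_one n (F := F)

variable [IsFractionRing (QuotK (pKR n)) F] {n}

lemma xbar_ne_zero : x̄ ≠ 0 := by
  simpa using aeval_xbar_ybar_ne_zero (F := F) (q := MvPolynomial.X 0) 1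
    (eval_one_kernelK_pKR n) (by simp)

lemma ybar_ne_zero : ȳ ≠ 0 := by
  simpa using aeval_xbar_ybar_ne_zero (F := F) (q := MvPolynomial.X 1) 1
    (eval_one_kernelK_pKR n) (by simp)

lemma curveCoordNum_xbar_ybar_ne_zero (hn : 3 ≤ n) : curveCoordNum ω x̄ ȳ ≠ 0 := by
  have := aeval_xbar_ybar_ne_zero (F := F)
    (q := curveCoordNum (MvPolynomial.C (expRoot n)) (MvPolynomial.X 0) (MvPolynomial.X 1)) 0
    (eval_zero_kernelK_pKR n) (by
      simp [curveCoordNum, map_ofNat]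
      intro h
      exact expRoot_ne_one hn (by linear_combination h))
  simpa [curveCoordNum, map_ofNat] using this

lemma curveCoordDen_xbar_ybar_ne_zero (hn : 3 ≤ n) : curveCoordDen ω x̄ ȳ ≠ 0 := by
  have := aeval_xbar_ybar_ne_zero (F := F)
    (q := curveCoordDen (MvPolynomial.C (expRoot n)) (MvPolynomial.X 0) (MvPolynomial.X 1)) 0
    (eval_zero_kernelK_pKR n) (by
      simp [curveCoordDen, map_ofNat]
      intro h
      exact expRoot_ne_one hn (by linear_combination -h))
  simpa [curveCoordDen, map_ofNat] using this

lemma leadCoeffX_ybar_ne_zero (hn : 3 ≤ n) : leadCoeffX ω ȳ ≠ 0 := by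
  have := aeval_xbar_ybar_ne_zero (F := F)
    (q := leadCoeffX (MvPolynomial.C (expRoot n)) (MvPolynomial.X 1)) 0
    (eval_zero_kernelK_pKR n) (by simpa [leadCoeffX] using expRoot_add_one_ne_zero hn)
  simpa [leadCoeffX] using this

lemma algebraMap_expRoot_sub_curveCoord_ne_zero (hn : 3 ≤ n) : ω - curveCoord ω x̄ ȳ ≠ 0 := by
  have := aeval_xbar_ybar_ne_zero (F := F)
    (q := MvPolynomial.C (expRoot n) *
        curveCoordDen (MvPolynomial.C (expRoot n)) (MvPolynomial.X 0) (MvPolynomial.X 1) -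
      curveCoordNum (MvPolynomial.C (expRoot n)) (MvPolynomial.X 0) (MvPolynomial.X 1)) 0
    (eval_zero_kernelK_pKR n) (by
      simp [curveCoordNum, curveCoordDen, map_ofNat]
      intro h
      exact mul_ne_zero (sub_ne_zero.mpr (expRoot_ne_one hn).symm) (expRoot_add_one_ne_zero hn)
        (by linear_combination h))
  rw [curveCoord, sub_div' (curveCoordDen_xbar_ybar_ne_zero hn)]
  exact div_ne_zero (by simpa [curveCoordNum, curveCoordDen, map_ofNat] using this)
    (curveCoordDen_xbar_ybar_ne_zero hn)

lemma one_sub_curveCoord_ne_zero (hn : 3 ≤ n) : 1 - curveCoord ω x̄ ȳ ≠ 0 := by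
  have := aeval_xbar_ybar_ne_zero (F := F)
    (q := curveCoordDen (MvPolynomial.C (expRoot n)) (MvPolynomial.X 0) (MvPolynomial.X 1) -
      curveCoordNum (MvPolynomial.C (expRoot n)) (MvPolynomial.X 0) (MvPolynomial.X 1)) 0
    (eval_zero_kernelK_pKR n) (by
      simp [curveCoordNum, curveCoordDen, map_ofNat]
      intro h
      exact mul_ne_zero two_ne_zero (sub_ne_zero.mpr (expRoot_ne_one hn).symm)
        (by linear_combination h))
  rw [curveCoord, sub_div' (curveCoordDen_xbar_ybar_ne_zero hn)]
  exact div_ne_zero (by simpa [curveCoordNum, curveCoordDen, map_ofNat] using this)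
    (curveCoordDen_xbar_ybar_ne_zero hn)

lemma curveCoord_xbar_ybar_ne_zero (hn : 3 ≤ n) : curveCoord ω x̄ ȳ ≠ 0 :=
  div_ne_zero (curveCoordNum_xbar_ybar_ne_zero hn) (curveCoordDen_xbar_ybar_ne_zero hn)

lemma ybar_mul_apply_ybar (hn : 3 ≤ n) {ξ : F ≃ₐ[ℂ] F}
    (hξy : ξ ȳ = Polynomial.aeval x̄ (polyC (pKR n)) / (Polynomial.aeval x̄ (polyA (pKR n)) * ȳ)) :
    ȳ * ξ ȳ = x̄ ^ 2 := by
  have hω1 : ω + 1 ≠ 0 := by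
    simpa using (map_ne_zero (algebraMap ℂ F)).mpr (expRoot_add_one_ne_zero hn)
  have hβ : algebraMap ℂ F (pKR n 1 (-1)) ≠ 0 := right_ne_zero_of_mul
    ((eight_mul_expRoot_mul_pKR_one_neg_one n (F := F)).symm ▸ pow_ne_zero 2 hω1)
  have hy := ybar_ne_zero (n := n) (F := F)
  rw [hξy]
  simp [polyA, polyC]
  field_simp

lemma leadCoeffX_mul_xbar_mul_apply_xbar (hn : 3 ≤ n) {η : F ≃ₐ[ℂ] F}
    (hηx : η x̄ =
      Polynomial.aeval ȳ (polyCt (pKR n)) / (Polynomial.aeval ȳ (polyAt (pKR n)) * x̄)) :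
    leadCoeffX ω ȳ * x̄ * η x̄ = (ω + 1) ^ 2 * ȳ ^ 2 - (ω - 1) ^ 2 * ȳ := by
  have hA : 8 * ω * (algebraMap ℂ F (pKR n 1 0) * ȳ + algebraMap ℂ F (pKR n 1 (-1))) =
      leadCoeffX ω ȳ := by
    unfold leadCoeffX
    linear_combination ȳ * eight_mul_expRoot_mul_pKR_one_zero n (F := F) +
      eight_mul_expRoot_mul_pKR_one_neg_one n (F := F)
  have hden : algebraMap ℂ F (pKR n 1 0) * ȳ + algebraMap ℂ F (pKR n 1 (-1)) ≠ 0 :=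
    right_ne_zero_of_mul (hA ▸ leadCoeffX_ybar_ne_zero hn)
  have hx := xbar_ne_zero (n := n) (F := F)
  rw [hηx]
  simp [polyAt, polyCt]
  rw [← hA, mul_div_assoc', div_eq_iff (mul_ne_zero hden hx)]
  linear_combination (algebraMap ℂ F (pKR n 1 0) * ȳ + algebraMap ℂ F (pKR n 1 (-1))) * x̄ *
    (ȳ ^ 2 * eight_mul_expRoot_mul_pKR_one_neg_one n (F := F) +
      ȳ * eight_mul_expRoot_mul_pKR_one_zero n (F := F))

lemma apply_curveCoord_eq_div (hn : 3 ≤ n) {ξ : F ≃ₐ[ℂ] F} (hξx : ξ x̄ = x̄)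
    (hξy : ξ ȳ = Polynomial.aeval x̄ (polyC (pKR n)) / (Polynomial.aeval x̄ (polyA (pKR n)) * ȳ)) :
    ξ (curveCoord ω x̄ ȳ) = ω / curveCoord ω x̄ ȳ :=
  map_curveCoord_eq_div_of_mul_map_eq_sq ξ (scaledKernel_xbar_ybar n) ybar_ne_zero
    (curveCoordNum_xbar_ybar_ne_zero hn) (curveCoordDen_xbar_ybar_ne_zero hn) (ξ.commutes _) hξx
    (ybar_mul_apply_ybar hn hξy)

lemma apply_curveCoord_eq_one_div (hn : 3 ≤ n) {η : F ≃ₐ[ℂ] F} (hηy : η ȳ = ȳ)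
    (hηx : η x̄ =
      Polynomial.aeval ȳ (polyCt (pKR n)) / (Polynomial.aeval ȳ (polyAt (pKR n)) * x̄)) :
    η (curveCoord ω x̄ ȳ) = 1 / curveCoord ω x̄ ȳ :=
  map_curveCoord_eq_one_div_of_mul_map_eq η (scaledKernel_xbar_ybar n) xbar_ne_zero
    (leadCoeffX_ybar_ne_zero hn) (curveCoordNum_xbar_ybar_ne_zero hn)
    (curveCoordDen_xbar_ybar_ne_zero hn) (η.commutes _) hηy
    (leadCoeffX_mul_xbar_mul_apply_xbar hn hηx)

lemma injective_apply_curveCoord (hn : 3 ≤ n) :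
    Function.Injective fun σ : F ≃ₐ[ℂ] F => σ (curveCoord ω x̄ ȳ) := by
  intro σ τ (h : σ _ = τ _)
  have hK := scaledKernel_xbar_ybar n (F := F)
  have hv := curveCoordDen_xbar_ybar_ne_zero hn (F := F)
  apply AlgEquiv.ext_of_xbar_ybar (p := pKR n)
  · rw [x_eq_of_scaledKernel_eq_zero hK hv (algebraMap_expRoot_sub_curveCoord_ne_zero hn)
      (one_sub_curveCoord_ne_zero hn)]
    simp only [map_div₀, map_mul, map_add, map_sub, map_one, AlgEquiv.commutes, h]
  · rw [y_eq_of_scaledKernel_eq_zero hK hv (one_sub_curveCoord_ne_zero hn)]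
    simp only [map_div₀, map_pow, map_add, map_sub, map_one, h]

end WalkCurve

/-- for `n ≥ 3`, the above walk has zero drift, angle `θ = π/n`, and its
group `W = ⟨ξ, η⟩` is finite of order `2n`. -/
theorem kurkova_raschel_group_order_2n (n : ℕ) (hn : 3 ≤ n)
    (F : Type) [Field F] [Algebra ℂ F] [Algebra (QuotK (pKR n)) F]
    [IsScalarTower ℂ (QuotK (pKR n)) F] [IsFractionRing (QuotK (pKR n)) F]
    (ξ η : F ≃ₐ[ℂ] F)
    (hξx : ξ (xbar (pKR n) F) = xbar (pKR n) F)
    (hξy : ξ (ybar (pKR n) F) =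
      Polynomial.aeval (xbar (pKR n) F) (polyC (pKR n)) /
        (Polynomial.aeval (xbar (pKR n) F) (polyA (pKR n)) * ybar (pKR n) F))
    (hηy : η (ybar (pKR n) F) = ybar (pKR n) F)
    (hηx : η (xbar (pKR n) F) =
      Polynomial.aeval (ybar (pKR n) F) (polyCt (pKR n)) /
        (Polynomial.aeval (ybar (pKR n) F) (polyAt (pKR n)) * xbar (pKR n) F)) :
    (∑ i ∈ Finset.Icc (-1 : ℤ) 1, ∑ j ∈ Finset.Icc (-1 : ℤ) 1, (i : ℝ) * pKR n i j = 0) ∧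
    (∑ i ∈ Finset.Icc (-1 : ℤ) 1, ∑ j ∈ Finset.Icc (-1 : ℤ) 1, (j : ℝ) * pKR n i j = 0) ∧
    theta (pKR n) = Real.pi / n ∧
    ((Subgroup.closure {ξ, η} : Subgroup (F ≃ₐ[ℂ] F)) : Set (F ≃ₐ[ℂ] F)).Finite ∧
    Nat.card ↥(Subgroup.closure {ξ, η} : Subgroup (F ≃ₐ[ℂ] F)) = 2 * n := by
  have hprim :=
    (isPrimitiveRoot_expRoot (n := n) (by omega)).map_of_injective (algebraMap ℂ F).injective
  have ht := injective_apply_curveCoord hn (F := F)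
  have hξ := apply_curveCoord_eq_div hn hξx hξy
  have hη := apply_curveCoord_eq_one_div hn hηy hηx
  have hξ2 : ξ * ξ = 1 :=
    AlgEquiv.mul_self_eq_one_of_apply_eq_div ht (hprim.ne_zero (by omega)) (ξ.commutes _) hξ
  have hη2 : η * η = 1 := AlgEquiv.mul_self_eq_one_of_apply_eq_div ht one_ne_zero (map_one η) hη
  have hord : orderOf (η * ξ) = n := by
    rw [AlgEquiv.orderOf_eq_of_apply_eq_mul ht (curveCoord_xbar_ybar_ne_zero hn)
      ((η * ξ).commutes _), ← hprim.eq_orderOf]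
    rw [AlgEquiv.mul_apply, hξ, map_div₀, η.commutes, hη, one_div, div_inv_eq_mul]
  have hcard := Subgroup.card_closure_pair_of_mul_self_eq_one hξ2 hη2 (by omega)
  have : Finite (Subgroup.closure {ξ, η}) :=
    Nat.finite_of_card_ne_zero (by rw [hcard, hord]; omega)
  exact ⟨drift_x_pKR n, drift_y_pKR n, theta_pKR n hn, Set.toFinite _, by rw [hcard, hord]⟩
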